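/- arXiv:1704.07881 — 2 statements merged into one kernel-verified Lean document; each statement's English description precedes it below -/
import Mathlib

section
/- Let η ∈ (0,1) and define f_η(u) := (1 − η sin(2u))/(4 cos(2u)) for u ∈ (−π/4, π/4). Then f_η(u) ≥ √(1 − η²)/4 for all u ∈ (−π/4, π/4), with equality if and only if sin(2u) = η; consequently the minimal value of the steady-state uncertainty √(f_η(u)) over u ∈ (−π/4, π/4) equals (1/2)·(1 − η²)^{1/4}. -/
open Real Set

lemma key (η s c : ℝ) (hη0 : 0 < η) (hη1 : η < 1) (hc : 0 < c)
    (hsc : s^2 + c^2 = 1) :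
    Real.sqrt (1 - η^2) * c ≤ 1 - η * s ∧
    (Real.sqrt (1 - η^2) * c = 1 - η * s ↔ s = η) := by
  have hs1 : s^2 ≤ 1 := by nlinarith [sq_nonneg c]
  have hs : -1 ≤ s ∧ s ≤ 1 := abs_le.mp (abs_le_one_iff_mul_self_le_one.mpr (by nlinarith))
  have hpos : 0 < 1 - η * s := by nlinarith [hs.1, hs.2]
  have hsq : Real.sqrt (1 - η^2) ^ 2 = 1 - η^2 := Real.sq_sqrt (by nlinarith)
  have hnn : 0 ≤ Real.sqrt (1 - η^2) := Real.sqrt_nonneg _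
  have hle : Real.sqrt (1 - η^2) * c ≤ 1 - η * s := by
    nlinarith [sq_nonneg (s - η), sq_nonneg (Real.sqrt (1 - η^2) * c - (1 - η * s)),
      sq_nonneg (Real.sqrt (1 - η^2) * c + (1 - η * s)), mul_pos hc hpos]
  refine ⟨hle, ⟨fun h => ?_, fun h => ?_⟩⟩
  · nlinarith [sq_nonneg (s - η)]
  · have hc2 : c^2 = 1 - η^2 := by rw [h] at hsc; nlinarith
    have hcs : Real.sqrt (1 - η^2) = c := by rw [← hc2]; exact Real.sqrt_sq hc.le
    rw [hcs, h]; nlinarith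

lemma quarter (x : ℝ) (hx : 0 ≤ x) :
    Real.sqrt (Real.sqrt x / 4) = 1/2 * x ^ ((1:ℝ)/4) := by
  have h1 : Real.sqrt (Real.sqrt x) = x ^ ((1:ℝ)/4) := by
    rw [Real.sqrt_eq_rpow, Real.sqrt_eq_rpow, ← Real.rpow_mul hx]
    norm_num
  rw [show Real.sqrt x / 4 = Real.sqrt x * (1/4) by ring,
    Real.sqrt_mul (Real.sqrt_nonneg _), h1,
    show Real.sqrt (1/4 : ℝ) = 1/2 by
      rw [show (1/4:ℝ) = (1/2)^2 by norm_num, Real.sqrt_sq (by norm_num)]]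
  ring

theorem stmt_7 (η : ℝ) (hη : η ∈ Ioo (0:ℝ) 1)
    (f : ℝ → ℝ)
    (hf : ∀ u : ℝ, f u = (1 - η * Real.sin (2*u)) / (4 * Real.cos (2*u))) :
    (∀ u ∈ Ioo (-(π/4)) (π/4),
      Real.sqrt (1 - η^2) / 4 ≤ f u ∧ (f u = Real.sqrt (1 - η^2) / 4 ↔ Real.sin (2*u) = η)) ∧
    IsLeast ((fun u => Real.sqrt (f u)) '' Ioo (-(π/4)) (π/4))
      ((1/2) * (1 - η^2) ^ ((1:ℝ)/4)) := by
  obtain ⟨hη0, hη1⟩ := hη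
  have main : ∀ u ∈ Ioo (-(π/4)) (π/4),
      Real.sqrt (1 - η^2) / 4 ≤ f u ∧ (f u = Real.sqrt (1 - η^2) / 4 ↔ Real.sin (2*u) = η) := by
    intro u hu
    have hcos : 0 < Real.cos (2*u) := by
      apply Real.cos_pos_of_mem_Ioo
      constructor <;> [nlinarith [hu.1]; nlinarith [hu.2]]
    have hsc : Real.sin (2*u)^2 + Real.cos (2*u)^2 = 1 := Real.sin_sq_add_cos_sq _
    obtain ⟨hle, hiff⟩ := key η (Real.sin (2*u)) (Real.cos (2*u)) hη0 hη1 hcos hsc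
    rw [hf]
    constructor
    · rw [div_le_div_iff₀ (by norm_num) (by positivity)]
      nlinarith
    · rw [div_eq_div_iff (by positivity) (by norm_num), ← hiff]
      constructor <;> intro h <;> nlinarith
  refine ⟨main, ?_, ?_⟩
  · -- membership: u = arcsin η / 2
    have hη2 : 0 < 1 - η^2 := by nlinarith
    set u := Real.arcsin η / 2 with hu
    have harc : Real.arcsin η ∈ Ioo 0 (π/2) := by
      constructor
      · exact Real.arcsin_pos.mpr hη0
      · exact Real.arcsin_lt_pi_div_two.mpr hη1
    have hmem : u ∈ Ioo (-(π/4)) (π/4) := by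
      constructor
      · have := harc.1; simp only [hu]; nlinarith [Real.pi_pos]
      · have := harc.2; simp only [hu]; nlinarith
    have hsin : Real.sin (2*u) = η := by
      rw [hu]; rw [show 2 * (Real.arcsin η / 2) = Real.arcsin η by ring]
      exact Real.sin_arcsin (by linarith) (by linarith)
    refine ⟨u, hmem, ?_⟩
    have hfu : f u = Real.sqrt (1 - η^2) / 4 := (main u hmem).2.mpr hsin
    simp only [hfu]
    rw [quarter _ hη2.le]
  · -- lower bound
    rintro y ⟨u, hmem, rfl⟩
    have hη2 : 0 < 1 - η^2 := by nlinarith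
    have hle := (main u hmem).1
    have : Real.sqrt (Real.sqrt (1 - η^2) / 4) ≤ Real.sqrt (f u) := Real.sqrt_le_sqrt hle
    refine le_trans (le_of_eq ?_) this
    rw [quarter _ hη2.le]
end

section
/- Define g(φ) := (1 − 2 sin(2φ) cos²(2φ))/(4 cos²(2φ)) for φ ∈ (−π/4, π/4). There exists φ ∈ (0, π/4) such that g(φ) < 1/12. -/
open Real Set

theorem stmt_14
    (g : ℝ → ℝ)
    (hg : ∀ φ ∈ Ioo (-(π/4)) (π/4),
      g φ = (1 - 2 * Real.sin (2*φ) * Real.cos (2*φ) ^ 2) / (4 * Real.cos (2*φ) ^ 2)) :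
    ∃ φ ∈ Ioo (0:ℝ) (π/4), g φ < 1/12 := by
  set s : ℝ := 53/100 with hs
  have hs0 : (0:ℝ) < s := by norm_num [hs]
  have hs1 : s < 1 := by norm_num [hs]
  refine ⟨Real.arcsin s / 2, ⟨?_, ?_⟩, ?_⟩
  · have := Real.arcsin_pos.mpr hs0
    linarith
  · have := Real.arcsin_lt_pi_div_two.mpr hs1
    linarith
  · have hmem : Real.arcsin s / 2 ∈ Ioo (-(π/4)) (π/4) := by
      constructor
      · have h1 := Real.arcsin_pos.mpr hs0
        have : (0:ℝ) < π := Real.pi_pos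
        linarith
      · have := Real.arcsin_lt_pi_div_two.mpr hs1
        linarith
    rw [hg _ hmem]
    have h2 : 2 * (Real.arcsin s / 2) = Real.arcsin s := by ring
    rw [h2, Real.sin_arcsin (by norm_num [hs]) (le_of_lt hs1), Real.cos_arcsin]
    have hsq : Real.sqrt (1 - s^2) ^ 2 = 1 - s^2 :=
      Real.sq_sqrt (by norm_num [hs])
    rw [hsq]
    norm_num [hs]
end
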